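/- arXiv:2206.11625 — 2 statements merged into one kernel-verified Lean document; each statement's English description precedes it below -/
import Mathlib

section
/- Let G and H be finite simple graphs that are both twin-free and negation-free. Then the parity product G ⊞ H is twin-free and negation-free. -/
/-- The parity product `G ⊞ H` of two simple graphs: `(a,x)` is adjacent to `(b,y)` iff
exactly one of `a ~ b` (in `G`) and `x ~ y` (in `H`) holds. -/
def SimpleGraph.parityProd {α β : Type*} (G : SimpleGraph α) (H : SimpleGraph β) :
    SimpleGraph (α × β) where
  Adj p q := Xor' (G.Adj p.1 q.1) (H.Adj p.2 q.2)
  symm := ⟨fun (p q : α × β) h => by show Xor' (G.Adj q.1 p.1) (H.Adj q.2 p.2); rwa [G.adj_comm q.1 p.1, H.adj_comm q.2 p.2]⟩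
  loopless := ⟨fun p h => by simp [Xor'] at h⟩

/-
Writing `N(a,x) = N(b,y)` (resp. `N(b,y) = N(a,x)ᶜ`) out coordinatewise gives
`∀ c z, P c ↔ Q z` with `P` a statement about `G` alone and `Q` one about `H` alone.
Hence `P` and `Q` are both constantly true or both constantly false, and each of the four
cases is either the desired conclusion or a twin/negation pair in `G` or in `H`.
-/

theorem xor_iff_xor_iff_iff_iff {a b c d : Prop} :
    (Xor a b ↔ Xor c d) ↔ ((a ↔ c) ↔ (b ↔ d)) := by
  grind

theorem xor_iff_not_xor_iff_iff_iff {a b c d : Prop} :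
    (Xor a b ↔ ¬Xor c d) ↔ ((a ↔ c) ↔ (b ↔ ¬d)) := by
  grind

theorem forall_and_forall_or_forall_not_and_forall_not {ι κ : Type*} {P : ι → Prop}
    {Q : κ → Prop} (i : ι) (k : κ) (h : ∀ i k, P i ↔ Q k) :
    ((∀ i, P i) ∧ ∀ k, Q k) ∨ ((∀ i, ¬P i) ∧ ∀ k, ¬Q k) := by
  by_cases hi : P i
  · exact .inl ⟨fun i' => (h i' k).2 ((h i k).1 hi), fun k' => (h i k').1 hi⟩
  · exact .inr ⟨fun i' hi' => hi ((h i k).2 ((h i' k).1 hi')),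
      fun k' hk' => hi ((h i k').2 hk')⟩

theorem Set.eq_compl_of_forall_not_iff {α : Type*} {s t : Set α}
    (h : ∀ x, ¬(x ∈ s ↔ x ∈ t)) : t = sᶜ :=
  Set.ext fun x => (not_iff.1 (h x)).symm

namespace SimpleGraph

variable {V α β : Type*}

def TwinFree (G : SimpleGraph V) : Prop :=
  ∀ u v, G.neighborSet u = G.neighborSet v → u = v

def NegationFree (G : SimpleGraph V) : Prop :=
  ∀ u v, G.neighborSet v ≠ (G.neighborSet u)ᶜ

variable {G : SimpleGraph α} {H : SimpleGraph β}

@[simp]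
theorem parityProd_adj {p q : α × β} :
    (G.parityProd H).Adj p q ↔ Xor (G.Adj p.1 q.1) (H.Adj p.2 q.2) :=
  Iff.rfl

theorem neighborSet_parityProd_eq_iff {a b : α} {x y : β} :
    (G.parityProd H).neighborSet (a, x) = (G.parityProd H).neighborSet (b, y) ↔
      ∀ c z, (c ∈ G.neighborSet a ↔ c ∈ G.neighborSet b) ↔
        (z ∈ H.neighborSet x ↔ z ∈ H.neighborSet y) := by
  simp only [Set.ext_iff, Prod.forall, mem_neighborSet, parityProd_adj, xor_iff_xor_iff_iff_iff]

theorem neighborSet_parityProd_eq_compl_iff {a b : α} {x y : β} :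
    (G.parityProd H).neighborSet (b, y) = ((G.parityProd H).neighborSet (a, x))ᶜ ↔
      ∀ c z, (c ∈ G.neighborSet b ↔ c ∈ G.neighborSet a) ↔
        (z ∈ H.neighborSet y ↔ z ∈ (H.neighborSet x)ᶜ) := by
  simp only [Set.ext_iff, Prod.forall, mem_neighborSet, Set.mem_compl_iff, parityProd_adj,
    xor_iff_not_xor_iff_iff_iff]

theorem TwinFree.parityProd (hG : G.TwinFree) (hH : H.TwinFree) (hH' : H.NegationFree) :
    (G.parityProd H).TwinFree := by
  rintro ⟨a, x⟩ ⟨b, y⟩ h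
  rcases forall_and_forall_or_forall_not_and_forall_not a x
    (neighborSet_parityProd_eq_iff.1 h) with ⟨hab, hxy⟩ | ⟨-, hxy⟩
  · rw [hG a b (Set.ext hab), hH x y (Set.ext hxy)]
  · exact absurd (Set.eq_compl_of_forall_not_iff hxy) (hH' x y)

theorem NegationFree.parityProd (hG : G.NegationFree) (hH : H.NegationFree) :
    (G.parityProd H).NegationFree := by
  rintro ⟨a, x⟩ ⟨b, y⟩ h
  rcases forall_and_forall_or_forall_not_and_forall_not a x
    (neighborSet_parityProd_eq_compl_iff.1 h) with ⟨-, hxy⟩ | ⟨hab, -⟩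
  · exact hH x y (Set.ext hxy)
  · exact hG b a (Set.eq_compl_of_forall_not_iff hab)

end SimpleGraph

theorem stmt_5_general {α β : Type*}
    (G : SimpleGraph α) (H : SimpleGraph β)
    (hGtwin : ∀ u v : α, G.neighborSet u = G.neighborSet v → u = v)
    (hHtwin : ∀ u v : β, H.neighborSet u = H.neighborSet v → u = v)
    (hGneg : ∀ u v : α, G.neighborSet v ≠ (G.neighborSet u)ᶜ)
    (hHneg : ∀ u v : β, H.neighborSet v ≠ (H.neighborSet u)ᶜ) :
    (∀ p q : α × β, (G.parityProd H).neighborSet p = (G.parityProd H).neighborSet q → p = q) ∧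
    (∀ p q : α × β, (G.parityProd H).neighborSet q ≠ ((G.parityProd H).neighborSet p)ᶜ) :=
  ⟨SimpleGraph.TwinFree.parityProd hGtwin hHtwin hHneg,
    SimpleGraph.NegationFree.parityProd hGneg hHneg⟩

/-- If `G` and `H` are finite simple graphs, both twin-free and negation-free, then the
parity product `G ⊞ H` is twin-free and negation-free. -/
theorem stmt_5 {α β : Type*} [Fintype α] [Fintype β]
    (G : SimpleGraph α) (H : SimpleGraph β)
    (hGtwin : ∀ u v : α, G.neighborSet u = G.neighborSet v → u = v)
    (hHtwin : ∀ u v : β, H.neighborSet u = H.neighborSet v → u = v)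
    (hGneg : ∀ u v : α, G.neighborSet v ≠ (G.neighborSet u)ᶜ)
    (hHneg : ∀ u v : β, H.neighborSet v ≠ (H.neighborSet u)ᶜ) :
    (∀ p q : α × β, (G.parityProd H).neighborSet p = (G.parityProd H).neighborSet q → p = q) ∧
    (∀ p q : α × β, (G.parityProd H).neighborSet q ≠ ((G.parityProd H).neighborSet p)ᶜ) :=
  stmt_5_general G H hGtwin hHtwin hGneg hHneg
end

section
/- For every m ≥ 1, let G be the simple graph on the vertex set of functions Fin m → Fin 4 in which distinct x and y are adjacent if and only if A_m x y = 1, and let H be the induced subgraph of G on the vertices x not equal to the constant function 3 (removing the unique isolated vertex). Then H is a strongly regular graph with parameters (4^m − 1, 2^(2m−1), 4^(m−1), 4^(m−1)): it has 4^m − 1 vertices, is 2^(2m−1)-regular, adjacent vertices have exactly 4^(m−1) common neighbours, and non-adjacent vertices have exactly 4^(m−1) common neighbours. -/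
/-- The adjacency matrix of a triangle together with an isolated vertex, over `F2`. -/
def A1 : Matrix (Fin 4) (Fin 4) (ZMod 2) :=
  !![0,1,1,0; 1,0,1,0; 1,1,0,0; 0,0,0,0]

/-- The adjacency matrix of the `m`-fold parity product of the triangle-plus-isolated-vertex
graph, indexed by functions `Fin m → Fin 4`. -/
def Am (m : ℕ) : Matrix (Fin m → Fin 4) (Fin m → Fin 4) (ZMod 2) :=
  Matrix.of fun x y => ∑ i : Fin m, A1 (x i) (y i)

lemma A1_symm : ∀ a b : Fin 4, A1 a b = A1 b a := by
  intro a b; fin_cases a <;> fin_cases b <;> first | rfl | simp [A1]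

/-- The graph on `Fin m → Fin 4` whose adjacency is given by `A_m`. -/
def Gm (m : ℕ) : SimpleGraph (Fin m → Fin 4) where
  Adj x y := x ≠ y ∧ Am m x y = 1
  symm := ⟨by
    intro x y ⟨hne, h⟩
    refine ⟨hne.symm, ?_⟩
    have : Am m y x = Am m x y := by
      show ∑ i : Fin m, A1 (y i) (x i) = ∑ i : Fin m, A1 (x i) (y i)
      exact Finset.sum_congr rfl fun i _ => A1_symm (y i) (x i)
    rw [this]; exact h⟩
  loopless := ⟨fun x h => h.1 rfl⟩

instance (m : ℕ) : DecidableRel (Gm m).Adj :=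
  fun x y => decidable_of_iff (x ≠ y ∧ Am m x y = 1) Iff.rfl

instance (m : ℕ) (S : Set (Fin m → Fin 4)) : DecidableRel ((Gm m).induce S).Adj :=
  fun a b => decidable_of_iff ((Gm m).Adj a b) Iff.rfl

/-!
Send the triangle's vertices to the three nonzero vectors of `F₂²` and the isolated vertex to `0`:
then `A1` is the Gram matrix of the symplectic form `u₁v₂ + u₂v₁`, so `A_m` is the Gram matrix of
the standard symplectic form `ω` on `F₂^{2m}`, and `H` is the symplectic graph on the nonzero
vectors, `u ~ v ↔ ω(u, v) = 1`. Since `ω` is nondegenerate, `z ↦ ω(u, z)` is onto `F₂` for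
`u ≠ 0`, and for distinct nonzero `u, v` (linearly independent over `F₂`) the map
`z ↦ (ω(u, z), ω(v, z))` is onto `F₂²`. All fibres of a surjective additive map have the same
size, so every vertex has `4^m / 2` neighbours and every pair of distinct vertices has `4^m / 4`
common neighbours.
-/

open Finset

theorem AddMonoidHom.card_fiber_mul_card_of_surjective {G H : Type*} [AddGroup G] [Fintype G]
    [AddMonoid H] [Fintype H] [DecidableEq H] (f : G →+ H) (hf : Function.Surjective f) (c : H) :
    #{g | f g = c} * Fintype.card H = Fintype.card G :=
  calc #{g | f g = c} * Fintype.card H = ∑ d, #{g | f g = d} := by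
        rw [sum_const_nat fun d _ => card_fiber_eq_of_mem_range f (hf d) (hf c), card_univ,
          mul_comm]
    _ = Fintype.card G := (card_eq_sum_card_fiberwise fun g _ => mem_univ (f g)).symm

namespace SimpleGraph

theorem IsSRGWith.of_iso {V W : Type*} [Fintype V] [Fintype W] {G : SimpleGraph V}
    {G' : SimpleGraph W} [DecidableRel G.Adj] [DecidableRel G'.Adj] {n k ℓ μ : ℕ}
    (h : G.IsSRGWith n k ℓ μ) (e : G ≃g G') : G'.IsSRGWith n k ℓ μ := by
  have card_commonNeighbors (v w : V) : Fintype.card (G'.commonNeighbors (e v) (e w)) =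
      Fintype.card (G.commonNeighbors v w) :=
    Fintype.card_congr <| .symm <|
      e.toEquiv.subtypeEquiv fun _ => and_congr e.map_adj_iff.symm e.map_adj_iff.symm
  refine ⟨(Fintype.card_congr e.toEquiv).symm.trans h.card, fun w => ?_, fun v w hvw => ?_,
    fun v w hne hvw => ?_⟩
  · obtain ⟨v, rfl⟩ := e.surjective w
    rw [← card_neighborSet_eq_degree, ← h.regular v, ← card_neighborSet_eq_degree]
    exact Fintype.card_congr (e.toEquiv.subtypeEquiv fun _ => e.map_adj_iff.symm).symm
  · obtain ⟨v, rfl⟩ := e.surjective v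
    obtain ⟨w, rfl⟩ := e.surjective w
    rw [card_commonNeighbors, h.of_adj v w (e.map_adj_iff.mp hvw)]
  · obtain ⟨v, rfl⟩ := e.surjective v
    obtain ⟨w, rfl⟩ := e.surjective w
    rw [card_commonNeighbors,
      h.of_not_adj (e.injective.ne_iff.mp hne) (mt e.map_adj_iff.mpr hvw)]

end SimpleGraph

section Symplectic

variable {ι : Type*} [Fintype ι]

def symplecticForm : LinearMap.BilinForm (ZMod 2) (ι → ZMod 2 × ZMod 2) :=
  LinearMap.mk₂ (ZMod 2) (fun u v => ∑ i, ((u i).1 * (v i).2 + (u i).2 * (v i).1))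
    (fun _ _ _ => by rw [← sum_add_distrib]; exact sum_congr rfl fun _ _ => by simp; ring)
    (fun _ _ _ => by rw [smul_eq_mul, mul_sum]; exact sum_congr rfl fun _ _ => by simp; ring)
    (fun _ _ _ => by rw [← sum_add_distrib]; exact sum_congr rfl fun _ _ => by simp; ring)
    (fun _ _ _ => by rw [smul_eq_mul, mul_sum]; exact sum_congr rfl fun _ _ => by simp; ring)

theorem symplecticForm_apply (u v : ι → ZMod 2 × ZMod 2) :
    symplecticForm u v = ∑ i, ((u i).1 * (v i).2 + (u i).2 * (v i).1) := rfl

theorem symplecticForm_self (u : ι → ZMod 2 × ZMod 2) : symplecticForm u u = 0 :=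
  sum_eq_zero fun i _ => by rw [mul_comm]; exact CharTwo.add_self_eq_zero _

theorem symplecticForm_comm (u v : ι → ZMod 2 × ZMod 2) :
    symplecticForm u v = symplecticForm v u :=
  sum_congr rfl fun i _ => by ring

theorem symplecticForm_single [DecidableEq ι] (u : ι → ZMod 2 × ZMod 2) (i : ι)
    (q : ZMod 2 × ZMod 2) : symplecticForm u (Pi.single i q) = (u i).1 * q.2 + (u i).2 * q.1 := by
  rw [symplecticForm_apply, sum_eq_single i (fun j _ hj => by simp [hj]) (by simp)]
  simp

theorem exists_symplecticForm_eq_one {u : ι → ZMod 2 × ZMod 2} (hu : u ≠ 0) :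
    ∃ z, symplecticForm u z = 1 := by
  classical
  obtain ⟨i, hi⟩ := Function.ne_iff.mp hu
  have : ∀ p : ZMod 2 × ZMod 2, p ≠ 0 → ∃ q : ZMod 2 × ZMod 2, p.1 * q.2 + p.2 * q.1 = 1 := by
    decide
  obtain ⟨q, hq⟩ := this (u i) hi
  exact ⟨Pi.single i q, by rw [symplecticForm_single, hq]⟩

theorem symplecticForm_surjective {u : ι → ZMod 2 × ZMod 2} (hu : u ≠ 0) :
    Function.Surjective (symplecticForm u) := by
  obtain ⟨z, hz⟩ := exists_symplecticForm_eq_one hu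
  exact fun t => ⟨t • z, by rw [map_smul, hz, smul_eq_mul, mul_one]⟩

theorem symplecticForm_prod_surjective {u v : ι → ZMod 2 × ZMod 2} (hu : u ≠ 0) (hv : v ≠ 0)
    (huv : u ≠ v) : Function.Surjective ((symplecticForm u).prod (symplecticForm v)) := by
  intro t
  obtain ⟨a, ha⟩ := exists_symplecticForm_eq_one hu
  obtain ⟨b, hb⟩ := exists_symplecticForm_eq_one hv
  obtain ⟨c, hc⟩ := exists_symplecticForm_eq_one (u := u + v)
    (by rwa [← ZModModule.sub_eq_add, sub_ne_zero])
  rw [LinearMap.map_add₂] at hc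
  -- Points avoiding the lines `x₁ = 0`, `x₂ = 0`, `x₁ = x₂` respectively span `F₂²`.
  have : ∀ p q r t : ZMod 2 × ZMod 2, p.1 = 1 → q.2 = 1 → r.1 + r.2 = 1 →
      ∃ ε₁ ε₂ ε₃ : ZMod 2, ε₁ • p + ε₂ • q + ε₃ • r = t := by
    decide
  set f := (symplecticForm u).prod (symplecticForm v)
  obtain ⟨ε₁, ε₂, ε₃, hε⟩ := this (f a) (f b) (f c) t ha hb hc
  exact ⟨ε₁ • a + ε₂ • b + ε₃ • c, by simp only [map_add, map_smul, hε]⟩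

theorem card_filter_symplecticForm_eq_one [DecidableEq ι] {u : ι → ZMod 2 × ZMod 2}
    (hu : u ≠ 0) :
    #{z | symplecticForm u z = 1} = 2 ^ (2 * Fintype.card ι - 1) := by
  have key := (symplecticForm u).toAddMonoidHom.card_fiber_mul_card_of_surjective
    (symplecticForm_surjective hu) 1
  obtain ⟨i, -⟩ := Function.ne_iff.mp hu
  have hι : 0 < Fintype.card ι := Fintype.card_pos_iff.mpr ⟨i⟩
  simp only [LinearMap.toAddMonoidHom_coe, ZMod.card, Fintype.card_fun, Fintype.card_prod] at key
  rw [show (2 * 2) ^ Fintype.card ι = 2 ^ (2 * Fintype.card ι - 1) * 2 by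
    rw [← pow_succ, Nat.sub_add_cancel (by omega), pow_mul, sq]] at key
  exact Nat.eq_of_mul_eq_mul_right two_pos key

theorem card_filter_symplecticForm_eq_one_and [DecidableEq ι] {u v : ι → ZMod 2 × ZMod 2}
    (hu : u ≠ 0) (hv : v ≠ 0) (huv : u ≠ v) :
    #{z | symplecticForm u z = 1 ∧ symplecticForm v z = 1} = 4 ^ (Fintype.card ι - 1) := by
  have key := AddMonoidHom.card_fiber_mul_card_of_surjective
    ((symplecticForm u).prod (symplecticForm v)).toAddMonoidHom
    (symplecticForm_prod_surjective hu hv huv) (1, 1)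
  obtain ⟨i, -⟩ := Function.ne_iff.mp hu
  have hι : 0 < Fintype.card ι := Fintype.card_pos_iff.mpr ⟨i⟩
  simp only [LinearMap.toAddMonoidHom_coe, LinearMap.prod_apply, Function.prod, Prod.mk.injEq,
    ZMod.card, Fintype.card_fun, Fintype.card_prod] at key
  rw [show (2 * 2) ^ Fintype.card ι = 4 ^ (Fintype.card ι - 1) * 4 by
    rw [← pow_succ, Nat.sub_add_cancel hι]] at key
  exact Nat.eq_of_mul_eq_mul_right four_pos key

variable (ι) in
def symplecticGraph : SimpleGraph {u : ι → ZMod 2 × ZMod 2 // u ≠ 0} where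
  Adj u v := symplecticForm u.1 v.1 = 1
  symm := ⟨fun u v h => by rwa [symplecticForm_comm]⟩
  loopless := ⟨fun u h => by simp [symplecticForm_self] at h⟩

instance : DecidableRel (symplecticGraph ι).Adj :=
  fun u v => inferInstanceAs (Decidable (symplecticForm u.1 v.1 = 1))

theorem card_neighborSet_symplecticGraph [DecidableEq ι]
    (u : {u : ι → ZMod 2 × ZMod 2 // u ≠ 0}) :
    Fintype.card ((symplecticGraph ι).neighborSet u) = 2 ^ (2 * Fintype.card ι - 1) := by
  rw [← card_filter_symplecticForm_eq_one u.2, ← Fintype.card_subtype]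
  refine Fintype.card_congr (Equiv.subtypeSubtypeEquivSubtype (p := (· ≠ 0))
    (q := fun z => symplecticForm u.1 z = 1) fun h h0 => ?_)
  rw [h0, map_zero] at h
  exact zero_ne_one h

theorem card_commonNeighbors_symplecticGraph [DecidableEq ι]
    {u v : {u : ι → ZMod 2 × ZMod 2 // u ≠ 0}} (huv : u ≠ v) :
    Fintype.card ((symplecticGraph ι).commonNeighbors u v) = 4 ^ (Fintype.card ι - 1) := by
  rw [← card_filter_symplecticForm_eq_one_and u.2 v.2 (Subtype.val_injective.ne huv),
    ← Fintype.card_subtype]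
  refine Fintype.card_congr (Equiv.subtypeSubtypeEquivSubtype (p := (· ≠ 0))
    (q := fun z => symplecticForm u.1 z = 1 ∧ symplecticForm v.1 z = 1) fun h h0 => ?_)
  rw [h0, map_zero] at h
  exact zero_ne_one h.1

theorem symplecticGraph_isSRGWith [DecidableEq ι] :
    (symplecticGraph ι).IsSRGWith (4 ^ Fintype.card ι - 1) (2 ^ (2 * Fintype.card ι - 1))
      (4 ^ (Fintype.card ι - 1)) (4 ^ (Fintype.card ι - 1)) where
  card := by simp [Fintype.card_subtype_compl, Fintype.card_pi]
  regular u := by rw [← SimpleGraph.card_neighborSet_eq_degree, card_neighborSet_symplecticGraph]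
  of_adj _ _ h := card_commonNeighbors_symplecticGraph h.ne
  of_not_adj _ _ huv _ := card_commonNeighbors_symplecticGraph huv

end Symplectic

noncomputable def vertexEquiv : Fin 4 ≃ ZMod 2 × ZMod 2 :=
  Equiv.ofBijective ![(1, 0), (0, 1), (1, 1), (0, 0)] (by decide)

theorem A1_eq_symplectic (a b : Fin 4) :
    A1 a b = (vertexEquiv a).1 * (vertexEquiv b).2 + (vertexEquiv a).2 * (vertexEquiv b).1 := by
  fin_cases a <;> fin_cases b <;> rfl

noncomputable def vectorEquiv (m : ℕ) : (Fin m → Fin 4) ≃ (Fin m → ZMod 2 × ZMod 2) :=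
  Equiv.piCongrRight fun _ => vertexEquiv

theorem vectorEquiv_eq_zero_iff {m : ℕ} (x : Fin m → Fin 4) :
    vectorEquiv m x = 0 ↔ x = fun _ => 3 := by
  have : ∀ a : Fin 4, vertexEquiv a = 0 ↔ a = 3 := by decide
  simp [funext_iff, vectorEquiv, this]

theorem Gm_adj_iff {m : ℕ} (x y : Fin m → Fin 4) :
    (Gm m).Adj x y ↔ symplecticForm (vectorEquiv m x) (vectorEquiv m y) = 1 := by
  have hAm : Am m x y = symplecticForm (vectorEquiv m x) (vectorEquiv m y) := by
    simp only [Am, Matrix.of_apply, symplecticForm_apply]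
    exact sum_congr rfl fun i _ => A1_eq_symplectic (x i) (y i)
  refine ⟨fun h => hAm ▸ h.2, fun h => ⟨?_, hAm ▸ h⟩⟩
  rintro rfl
  rw [symplecticForm_self] at h
  exact zero_ne_one h

noncomputable def inducedGmIsoSymplecticGraph (m : ℕ) :
    (Gm m).induce {x | x ≠ fun _ => 3} ≃g symplecticGraph (Fin m) where
  toEquiv := (vectorEquiv m).subtypeEquiv fun x => (vectorEquiv_eq_zero_iff x).not.symm
  map_rel_iff' := (Gm_adj_iff _ _).symm

theorem stmt_11_general (m : ℕ) :
    ((Gm m).induce {x | x ≠ fun _ => 3}).IsSRGWith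
      (4 ^ m - 1) (2 ^ (2 * m - 1)) (4 ^ (m - 1)) (4 ^ (m - 1)) := by
  have h := symplecticGraph_isSRGWith (ι := Fin m)
  rw [Fintype.card_fin] at h
  exact h.of_iso (inducedGmIsoSymplecticGraph m).symm

/-- For every `m ≥ 1`, the induced subgraph of `G_m` on the vertices other than the constant
function `3` (the unique isolated vertex) is strongly regular with parameters
`(4^m - 1, 2^(2m-1), 4^(m-1), 4^(m-1))`. -/
theorem stmt_11 (m : ℕ) (hm : 1 ≤ m) :
    ((Gm m).induce {x | x ≠ fun _ => 3}).IsSRGWith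
      (4 ^ m - 1) (2 ^ (2 * m - 1)) (4 ^ (m - 1)) (4 ^ (m - 1)) :=
  stmt_11_general m
end
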